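/- arXiv:2407.01240 — 3 statements merged into one kernel-verified Lean document; each statement's English description precedes it below -/
import Mathlib

section
/- For the infinite doubled cone based at radius R, the Gaussian area satisfies |C(R,∞,φ)| = 2 cos(φ) e^{-R²/4} + I(R,φ), where I(R,φ) = √π R sin²(φ) (1 - erf((R/2) cos(φ))) e^{-R² sin²(φ)/4} and erf(x) = (2/√π) ∫_0^x e^{-y²} dy; i.e., the identity sec(φ) ∫_R^∞ r e^{-(r² + tan²(φ)(r-R)²)/4} dr = 2 cos(φ) e^{-R²/4} + √π R sin²(φ)(1 - erf((R/2)cos(φ))) e^{-R² sin²(φ)/4} holds for all R > 0 and φ ∈ [0, π/2). -/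
/-!
Completing the square, `r² + tan²φ (r - R)² = ((r - R sin²φ) / cos φ)² + R² sin²φ`, turns the
integrand into `e^{-R² sin²φ / 4}` times the shifted Gaussian moment `r e^{-((r - m) / (2σ))²}`
with `m = R sin²φ`, `σ = cos φ`. The latter has the explicit primitive
`-2σ² e^{-((r - m) / (2σ))²} + m σ √π erf((r - m) / (2σ))`, and at `r = R` the erf argument
is `(R / 2) cos φ`.
-/

open MeasureTheory Real

/-- The error function `erf(x) = (2/√π) ∫_0^x e^{-y²} dy`. -/
noncomputable def erf (x : ℝ) : ℝ :=
  (2 / Real.sqrt π) * ∫ y in (0 : ℝ)..x, Real.exp (-y ^ 2)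

open Filter Topology Set

lemma hasDerivAt_erf (x : ℝ) : HasDerivAt erf (2 / √π * exp (-x ^ 2)) x := by
  have hcont : Continuous fun y : ℝ => exp (-y ^ 2) := by fun_prop
  exact (intervalIntegral.integral_hasDerivAt_right (hcont.intervalIntegrable _ _)
    (hcont.stronglyMeasurableAtFilter _ _) hcont.continuousAt).const_mul _

lemma tendsto_erf_atTop : Tendsto erf atTop (𝓝 1) := by
  have hint : IntegrableOn (fun y : ℝ => exp (-y ^ 2)) (Ioi 0) := by
    simpa using (integrable_exp_neg_mul_sq one_pos).integrableOn
  have hlim := (intervalIntegral_tendsto_integral_Ioi 0 hint tendsto_id).const_mul (2 / √π)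
  have hval : ∫ y in Ioi (0 : ℝ), exp (-y ^ 2) = √π / 2 := by
    simpa using integral_gaussian_Ioi 1
  rwa [hval, show 2 / √π * (√π / 2) = 1 by field_simp] at hlim

section ShiftedGaussian

variable (m : ℝ) {σ : ℝ}

lemma integrable_mul_exp_neg_div_sq (hσ : σ ≠ 0) :
    Integrable fun x : ℝ => x * exp (-((x - m) / (2 * σ)) ^ 2) := by
  have h : Integrable fun y : ℝ => (2 * σ) * (y * exp (-1 * y ^ 2)) + m * exp (-1 * y ^ 2) :=
    ((integrable_mul_exp_neg_mul_sq one_pos).const_mul _).add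
      ((integrable_exp_neg_mul_sq one_pos).const_mul _)
  refine ((h.comp_div (mul_ne_zero two_ne_zero hσ)).comp_sub_right m).congr
    (Eventually.of_forall fun x => ?_)
  simp only [neg_one_mul]
  field_simp
  ring

lemma hasDerivAt_neg_exp_add_erf (hσ : σ ≠ 0) (x : ℝ) :
    HasDerivAt (fun x => -2 * σ ^ 2 * exp (-((x - m) / (2 * σ)) ^ 2) +
        m * σ * √π * erf ((x - m) / (2 * σ)))
      (x * exp (-((x - m) / (2 * σ)) ^ 2)) x := by
  have hu : HasDerivAt (fun x => (x - m) / (2 * σ)) (1 / (2 * σ)) x := by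
    simpa using ((hasDerivAt_id x).sub_const m).div_const (2 * σ)
  refine ((((hu.fun_pow 2).fun_neg.exp).const_mul (-2 * σ ^ 2)).add
    (((hasDerivAt_erf _).comp x hu).const_mul (m * σ * √π))).congr_deriv ?_
  have : √π ≠ 0 := by positivity
  norm_num
  field_simp
  ring

lemma integral_Ioi_mul_exp_neg_div_sq (a : ℝ) (hσ : 0 < σ) :
    ∫ x in Ioi a, x * exp (-((x - m) / (2 * σ)) ^ 2) =
      2 * σ ^ 2 * exp (-((a - m) / (2 * σ)) ^ 2) +
        m * σ * √π * (1 - erf ((a - m) / (2 * σ))) := by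
  have hu : Tendsto (fun x => (x - m) / (2 * σ)) atTop atTop :=
    (tendsto_atTop_add_const_right _ (-m) tendsto_id).atTop_div_const (by positivity)
  have hexp : Tendsto (fun y : ℝ => exp (-y ^ 2)) atTop (𝓝 0) :=
    tendsto_exp_atBot.comp (tendsto_neg_atTop_atBot.comp (tendsto_pow_atTop two_ne_zero))
  have hlim := ((hexp.comp hu).const_mul (-2 * σ ^ 2)).add
    ((tendsto_erf_atTop.comp hu).const_mul (m * σ * √π))
  rw [integral_Ioi_of_hasDerivAt_of_tendsto'
    (fun x _ => hasDerivAt_neg_exp_add_erf m hσ.ne' x)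
    (integrable_mul_exp_neg_div_sq m hσ.ne').integrableOn hlim]
  ring

end ShiftedGaussian

lemma sq_add_tan_sq_mul_sub_sq (x R : ℝ) {φ : ℝ} (hφ : cos φ ≠ 0) :
    x ^ 2 + tan φ ^ 2 * (x - R) ^ 2 =
      ((x - sin φ ^ 2 * R) / cos φ) ^ 2 + R ^ 2 * sin φ ^ 2 := by
  rw [tan_eq_sin_div_cos]
  field_simp
  linear_combination (x ^ 2 - R ^ 2 * sin φ ^ 2) * sin_sq_add_cos_sq φ

theorem stmt_7_general (R φ : ℝ) (hφ : φ ∈ Set.Ico 0 (π / 2)) :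
    ((1 / Real.cos φ) *
        ∫ r in Set.Ioi R,
          r * Real.exp (-(r ^ 2 + Real.tan φ ^ 2 * (r - R) ^ 2) / 4)) =
      2 * Real.cos φ * Real.exp (-R ^ 2 / 4) +
        Real.sqrt π * R * Real.sin φ ^ 2 * (1 - erf (R / 2 * Real.cos φ)) *
          Real.exp (-(R ^ 2 * Real.sin φ ^ 2) / 4) := by
  have hc : 0 < cos φ := cos_pos_of_mem_Ioo ⟨by linarith [hφ.1, pi_pos], hφ.2⟩
  have hsplit : ∀ r, exp (-(r ^ 2 + tan φ ^ 2 * (r - R) ^ 2) / 4) =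
      exp (-(R ^ 2 * sin φ ^ 2) / 4) * exp (-((r - sin φ ^ 2 * R) / (2 * cos φ)) ^ 2) := by
    intro r
    rw [← exp_add, sq_add_tan_sq_mul_sub_sq r R hc.ne']
    ring_nf
  have hstart : (R - sin φ ^ 2 * R) / (2 * cos φ) = R / 2 * cos φ := by
    field_simp
    linear_combination -R * sin_sq_add_cos_sq φ
  have hexp : exp (-(R ^ 2 * sin φ ^ 2) / 4) * exp (-(R / 2 * cos φ) ^ 2) = exp (-R ^ 2 / 4) := by
    rw [← exp_add]
    congr 1
    linear_combination -(R ^ 2 / 4) * sin_sq_add_cos_sq φ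
  simp_rw [hsplit, mul_left_comm _ (exp (-(R ^ 2 * sin φ ^ 2) / 4))]
  rw [integral_const_mul, integral_Ioi_mul_exp_neg_div_sq _ R hc, hstart, ← hexp]
  field_simp

/-- Gaussian area of the infinite doubled cone:
`sec φ ∫_R^∞ r e^{-(r²+tan²φ(r-R)²)/4} dr
  = 2 cos φ e^{-R²/4} + √π R sin²φ (1 - erf((R/2)cos φ)) e^{-R² sin²φ/4}`. -/
theorem stmt_7 (R φ : ℝ) (hR : 0 < R) (hφ : φ ∈ Set.Ico 0 (π / 2)) :
    ((1 / Real.cos φ) *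
        ∫ r in Set.Ioi R,
          r * Real.exp (-(r ^ 2 + Real.tan φ ^ 2 * (r - R) ^ 2) / 4)) =
      2 * Real.cos φ * Real.exp (-R ^ 2 / 4) +
        Real.sqrt π * R * Real.sin φ ^ 2 * (1 - erf (R / 2 * Real.cos φ)) *
          Real.exp (-(R ^ 2 * Real.sin φ ^ 2) / 4) :=
  stmt_7_general R φ hφ
end

section
/- For the translated doubled cone C(R,∞,h,φ) (the doubled cone C(R,∞,φ) shifted vertically by ±h with each sheet staying on its side of the plane): if R ≤ 0.2 then for all h ≥ 0 and φ ∈ [0,π/2], the Gaussian area satisfies |C(R,∞,h,φ)| ≤ |D(R,∞,h)| = 2 e^{-h²/4} e^{-R²/4}. -/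
/-!
Since `(a + h)² ≥ a² + h²` for `a, h ≥ 0`, translating the sheets by `h` costs at least the
factor `e^{-h²/4}` pointwise, so it suffices to treat `h = 0`. There, completing the square,
`r² + tan²φ (r - R)² = (r - m)² / cos²φ + (R sin φ)²` with `m = R sin²φ`, turns the cone integral
into a first moment of a shifted Gaussian: the `(r - m)` part integrates exactly and the `m` part
is bounded by the whole Gaussian integral. The resulting bound is `≤ 2 e^{-R²/4}` as soon as
`R (1 + cos φ) √π ≤ e^{-(R cos φ)²/4}`, which holds for `R ≤ 0.2`.
-/

open MeasureTheory Real Set Filter Topology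

/-- Gaussian area of the translated doubled cone `C(R,∞,h,φ)`, whose sheets are the
graphs `z = ±(tan φ (r-R) + h)` over `r > R`:
`sec φ ∫_R^∞ r e^{-(r² + (tan φ (r-R) + h)²)/4} dr`. -/
noncomputable def transConeArea (R h φ : ℝ) : ℝ :=
  (1 / Real.cos φ) *
    ∫ r in Set.Ioi R,
      r * Real.exp (-(r ^ 2 + (Real.tan φ * (r - R) + h) ^ 2) / 4)

theorem tendsto_exp_neg_mul_sub_sq_atTop {b : ℝ} (hb : 0 < b) (m : ℝ) :
    Tendsto (fun x => exp (-b * (x - m) ^ 2)) atTop (𝓝 0) :=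
  tendsto_exp_atBot.comp <| ((tendsto_pow_atTop two_ne_zero).comp
    (tendsto_atTop_add_const_right atTop (-m) tendsto_id)).const_mul_atTop_of_neg (neg_lt_zero.2 hb)

theorem integral_Ioi_sub_mul_exp_neg_mul_sub_sq {b : ℝ} (hb : 0 < b) (a m : ℝ) :
    ∫ x in Ioi a, (x - m) * exp (-b * (x - m) ^ 2) = exp (-b * (a - m) ^ 2) / (2 * b) := by
  have hderiv (x : ℝ) : HasDerivAt (fun x => -(2 * b)⁻¹ * exp (-b * (x - m) ^ 2))
      ((x - m) * exp (-b * (x - m) ^ 2)) x := by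
    have hexp : HasDerivAt (fun x => -b * (x - m) ^ 2) (-b * (2 * (x - m))) x := by
      simpa using (((hasDerivAt_id x).sub_const m).fun_pow 2).const_mul (-b)
    exact (hexp.exp.const_mul _).congr_deriv (by field_simp)
  rw [integral_Ioi_of_hasDerivAt_of_tendsto' (fun x _ => hderiv x)
    ((integrable_mul_exp_neg_mul_sq hb).comp_sub_right m).integrableOn
    (by simpa using (tendsto_exp_neg_mul_sub_sq_atTop hb m).const_mul (-(2 * b)⁻¹))]
  ring

theorem setIntegral_exp_neg_mul_sub_sq_le {b : ℝ} (hb : 0 < b) (s : Set ℝ) (m : ℝ) :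
    ∫ x in s, exp (-b * (x - m) ^ 2) ≤ √(π / b) := by
  calc ∫ x in s, exp (-b * (x - m) ^ 2)
      ≤ ∫ x, exp (-b * (x - m) ^ 2) :=
        setIntegral_le_integral ((integrable_exp_neg_mul_sq hb).comp_sub_right m)
          (ae_of_all _ fun _ => (exp_pos _).le)
    _ = √(π / b) := by
        rw [integral_sub_right_eq_self (fun x => exp (-b * x ^ 2)), integral_gaussian]

theorem integral_Ioi_mul_exp_neg_mul_sub_sq_le {b : ℝ} (hb : 0 < b) (a : ℝ) {m : ℝ}
    (hm : 0 ≤ m) :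
    ∫ x in Ioi a, x * exp (-b * (x - m) ^ 2) ≤ exp (-b * (a - m) ^ 2) / (2 * b) + m * √(π / b) := by
  have hG : Integrable fun x => exp (-b * (x - m) ^ 2) :=
    (integrable_exp_neg_mul_sq hb).comp_sub_right m
  have hF : Integrable fun x => (x - m) * exp (-b * (x - m) ^ 2) :=
    (integrable_mul_exp_neg_mul_sq hb).comp_sub_right m
  have hsplit (x : ℝ) : x * exp (-b * (x - m) ^ 2)
      = (x - m) * exp (-b * (x - m) ^ 2) + m * exp (-b * (x - m) ^ 2) := by ring
  simp_rw [hsplit]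
  rw [integral_add hF.integrableOn (hG.const_mul m).integrableOn, integral_const_mul,
    integral_Ioi_sub_mul_exp_neg_mul_sub_sq hb]
  gcongr
  exact setIntegral_exp_neg_mul_sub_sq_le hb _ m

noncomputable def coneIntegrand (R h t r : ℝ) : ℝ :=
  r * exp (-(r ^ 2 + (t * (r - R) + h) ^ 2) / 4)

theorem transConeArea_eq (R h φ : ℝ) :
    transConeArea R h φ = (cos φ)⁻¹ * ∫ r in Ioi R, coneIntegrand R h (tan φ) r := by
  rw [transConeArea, one_div]
  rfl

theorem integrableOn_coneIntegrand {R : ℝ} (hR : 0 ≤ R) (h t : ℝ) :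
    IntegrableOn (coneIntegrand R h t) (Ioi R) := by
  refine (integrable_mul_exp_neg_mul_sq (b := 1 / 4) (by norm_num)).integrableOn.mono'
    (Continuous.aestronglyMeasurable (by unfold coneIntegrand; fun_prop)) ?_
  filter_upwards [self_mem_ae_restrict measurableSet_Ioi] with r hr
  have hr0 : 0 ≤ r := hR.trans hr.out.le
  rw [norm_of_nonneg (by unfold coneIntegrand; positivity)]
  unfold coneIntegrand
  gcongr
  linarith [sq_nonneg (t * (r - R) + h)]

theorem coneIntegrand_le_exp_mul {R h t r : ℝ} (hh : 0 ≤ h) (ht : 0 ≤ t) (hr : R ≤ r)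
    (hr0 : 0 ≤ r) : coneIntegrand R h t r ≤ exp (-h ^ 2 / 4) * coneIntegrand R 0 t r := by
  rw [coneIntegrand, coneIntegrand, mul_left_comm, ← exp_add]
  gcongr
  have : 0 ≤ t * (r - R) * h := by have := sub_nonneg.2 hr; positivity
  linarith

theorem transConeArea_le_exp_mul {R h φ : ℝ} (hR : 0 ≤ R) (hh : 0 ≤ h)
    (hφ : φ ∈ Icc 0 (π / 2)) : transConeArea R h φ ≤ exp (-h ^ 2 / 4) * transConeArea R 0 φ := by
  have ht := tan_nonneg_of_nonneg_of_le_pi_div_two hφ.1 hφ.2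
  have hc : 0 ≤ cos φ := cos_nonneg_of_mem_Icc ⟨by linarith [pi_pos, hφ.1], hφ.2⟩
  rw [transConeArea_eq, transConeArea_eq, mul_left_comm]
  refine mul_le_mul_of_nonneg_left ?_ (inv_nonneg.2 hc)
  rw [← integral_const_mul]
  exact setIntegral_mono_on (integrableOn_coneIntegrand hR h _)
    ((integrableOn_coneIntegrand hR 0 _).const_mul _) measurableSet_Ioi
    fun r hr => coneIntegrand_le_exp_mul hh ht hr.out.le (hR.trans hr.out.le)

theorem coneIntegrand_zero_eq {R φ : ℝ} (hc : cos φ ≠ 0) (r : ℝ) :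
    coneIntegrand R 0 (tan φ) r = exp (-(R * sin φ) ^ 2 / 4) *
      (r * exp (-(4 * cos φ ^ 2)⁻¹ * (r - R * sin φ ^ 2) ^ 2)) := by
  rw [coneIntegrand, mul_left_comm, ← exp_add, tan_eq_sin_div_cos]
  congr 2
  field_simp
  linear_combination
    ((r - R) ^ 2 + 2 * r * R - 2 * r ^ 2 + R ^ 2 * (sin φ ^ 2 - 1)) * sin_sq_add_cos_sq φ

theorem mul_sqrt_pi_le_exp {R c : ℝ} (hR0 : 0 ≤ R) (hR : R ≤ 0.2) (hc0 : 0 ≤ c)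
    (hc1 : c ≤ 1) :
    R * (1 + c) * √π ≤ exp (-(R * c) ^ 2 / 4) := by
  have hsqrt : √π ≤ 2 := sqrt_le_iff.2 ⟨by norm_num, by linarith [pi_le_four]⟩
  have hRc : (R * c) ^ 2 ≤ 0.2 ^ 2 :=
    pow_le_pow_left₀ (by positivity) ((mul_le_of_le_one_right hR0 hc1).trans hR) 2
  calc R * (1 + c) * √π ≤ 0.2 * 2 * 2 := by gcongr; linarith
    _ ≤ -(R * c) ^ 2 / 4 + 1 := by linarith
    _ ≤ exp (-(R * c) ^ 2 / 4) := add_one_le_exp _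

theorem transConeArea_zero_le {R φ : ℝ} (hR0 : 0 ≤ R) (hR : R ≤ 0.2) (hφ : φ ∈ Icc 0 (π / 2)) :
    transConeArea R 0 φ ≤ 2 * exp (-R ^ 2 / 4) := by
  rcases hφ.2.eq_or_lt with rfl | hlt
  · -- `1 / cos (π / 2) = 1 / 0 = 0`: the degenerate cone has area `0`
    simp only [transConeArea, cos_pi_div_two, div_zero, zero_mul]
    positivity
  have hc : 0 < cos φ := cos_pos_of_mem_Ioo ⟨by linarith [pi_pos, hφ.1], hlt⟩
  set c := cos φ
  set s := sin φ
  have hs : s ^ 2 = (1 - c) * (1 + c) := by rw [sin_sq]; ring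
  have hb : 0 < (4 * c ^ 2)⁻¹ := by positivity
  have htail := integral_Ioi_mul_exp_neg_mul_sub_sq_le hb R (m := R * s ^ 2) (by positivity)
  have hsqrt : √(π / (4 * c ^ 2)⁻¹) = 2 * c * √π := by
    rw [div_inv_eq_mul, show π * (4 * c ^ 2) = (2 * c) ^ 2 * π by ring,
      sqrt_mul (by positivity), sqrt_sq (by positivity)]
  have hboundary : exp (-(4 * c ^ 2)⁻¹ * (R - R * s ^ 2) ^ 2) / (2 * (4 * c ^ 2)⁻¹)
      = 2 * c ^ 2 * exp (-(R * c) ^ 2 / 4) := by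
    rw [show R - R * s ^ 2 = R * c ^ 2 by rw [sin_sq]; ring]
    field_simp
    norm_num
  rw [hsqrt, hboundary] at htail
  have hsplit : exp (-(R * s) ^ 2 / 4) * exp (-(R * c) ^ 2 / 4) = exp (-R ^ 2 / 4) := by
    rw [← exp_add]
    congr 1
    linear_combination (-R ^ 2 / 4) * sin_sq_add_cos_sq φ
  calc transConeArea R 0 φ
      = c⁻¹ * (exp (-(R * s) ^ 2 / 4) *
          ∫ r in Ioi R, r * exp (-(4 * c ^ 2)⁻¹ * (r - R * s ^ 2) ^ 2)) := by
        simp_rw [transConeArea_eq, coneIntegrand_zero_eq hc.ne', integral_const_mul]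
        rfl
    _ ≤ c⁻¹ * (exp (-(R * s) ^ 2 / 4) *
          (2 * c ^ 2 * exp (-(R * c) ^ 2 / 4) + R * s ^ 2 * (2 * c * √π))) := by
        gcongr
    _ = 2 * exp (-(R * s) ^ 2 / 4) *
          (c * exp (-(R * c) ^ 2 / 4) + (1 - c) * (R * (1 + c) * √π)) := by
        rw [hs]
        field_simp
    _ ≤ 2 * exp (-(R * s) ^ 2 / 4) *
          (c * exp (-(R * c) ^ 2 / 4) + (1 - c) * exp (-(R * c) ^ 2 / 4)) := by
        gcongr
        · linarith [cos_le_one φ]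
        · exact mul_sqrt_pi_le_exp hR0 hR hc.le (cos_le_one φ)
    _ = 2 * exp (-R ^ 2 / 4) := by
        rw [← hsplit]
        ring

/-- For `R ≤ 0.2`, all `h ≥ 0` and `φ ∈ [0,π/2]`, the Gaussian area of the translated
doubled cone is at most `|D(R,∞,h)| = 2 e^{-h²/4} e^{-R²/4}`. -/
theorem stmt_10 (R h φ : ℝ) (hR0 : 0 < R) (hR : R ≤ 0.2) (hh : 0 ≤ h)
    (hφ : φ ∈ Set.Icc 0 (π / 2)) :
    transConeArea R h φ ≤ 2 * Real.exp (-h ^ 2 / 4) * Real.exp (-R ^ 2 / 4) := by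
  calc transConeArea R h φ ≤ exp (-h ^ 2 / 4) * transConeArea R 0 φ :=
        transConeArea_le_exp_mul hR0.le hh hφ
    _ ≤ exp (-h ^ 2 / 4) * (2 * exp (-R ^ 2 / 4)) := by
        gcongr
        exact transConeArea_zero_le hR0.le hR hφ
    _ = 2 * exp (-h ^ 2 / 4) * exp (-R ^ 2 / 4) := by ring
end

section
/- If rotationally symmetric positive functions J on the unit hemisphere solve Δ_{S²} J + 4J = 0 with J'(0) = 0 at the pole (azimuthal variable φ ∈ [0,π/2]), then J must vanish at some φ₀ < π/2: i.e., there is no positive solution of Δ_{S²}J + 4J = 0 on the open hemisphere that is smooth at the pole. This follows by Sturm–Liouville comparison with f(φ) = cos(φ), which satisfies Δ_{S²} f + 2f = 0, is positive on [0,π/2), and vanishes exactly at φ = π/2. -/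
/-!
Multiplying the equation by `sin φ` puts it in self-adjoint form `(sin φ · J')' + 4 sin φ · J = 0`,
while `f = cos φ` solves `(sin φ · f')' + 2 sin φ · f = 0`. Their weighted Wronskian
`W = sin φ · (f J' - f' J)` therefore satisfies `W' = (2 - 4) sin φ · f · J = -2 sin φ cos φ J`,
which is negative wherever `J > 0` on `(0, π/2)`. But `W(0) = 0` and `W(π/2) = J(π/2) ≥ 0`,
so `W` cannot decrease strictly on `[0, π/2]`.
-/

open Real Set

noncomputable section

def sturmWronskian (J : ℝ → ℝ) (x : ℝ) : ℝ :=
  sin x * (cos x * deriv J x + sin x * J x)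

namespace sturmWronskian

variable {J : ℝ → ℝ} {x : ℝ}

@[simp]
lemma apply_zero (J : ℝ → ℝ) : sturmWronskian J 0 = 0 := by
  simp [sturmWronskian]

@[simp]
lemma apply_pi_div_two (J : ℝ → ℝ) : sturmWronskian J (π / 2) = J (π / 2) := by
  simp [sturmWronskian]

lemma hasDerivAt (hJ : DifferentiableAt ℝ J x) (hJ' : DifferentiableAt ℝ (deriv J) x) :
    HasDerivAt (sturmWronskian J)
      (cos x * (sin x * deriv (deriv J) x + cos x * deriv J x + 4 * sin x * J x)
        - 2 * sin x * cos x * J x) x := by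
  have h := (hasDerivAt_sin x).mul
    (((hasDerivAt_cos x).mul hJ'.hasDerivAt).add ((hasDerivAt_sin x).mul hJ.hasDerivAt))
  exact h.congr_deriv (by simp only [Pi.add_apply, Pi.mul_apply]; ring)

lemma deriv_eq_of_ode (hJ : DifferentiableAt ℝ J x) (hJ' : DifferentiableAt ℝ (deriv J) x)
    (hsin : sin x ≠ 0)
    (hode : deriv (deriv J) x + (cos x / sin x) * deriv J x + 4 * J x = 0) :
    deriv (sturmWronskian J) x = -2 * sin x * cos x * J x := by
  have hself : sin x * deriv (deriv J) x + cos x * deriv J x + 4 * sin x * J x = 0 := by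
    rw [← mul_eq_zero_of_right (sin x) hode]
    field_simp
  rw [(hasDerivAt hJ hJ').deriv, hself]
  ring

lemma strictAntiOn (hJ : Differentiable ℝ J) (hJ' : Differentiable ℝ (deriv J))
    (hode : ∀ φ ∈ Ioo (0 : ℝ) (π / 2),
      deriv (deriv J) φ + (cos φ / sin φ) * deriv J φ + 4 * J φ = 0)
    (hpos : ∀ φ ∈ Ioo (0 : ℝ) (π / 2), 0 < J φ) :
    StrictAntiOn (sturmWronskian J) (Icc 0 (π / 2)) := by
  refine strictAntiOn_of_deriv_neg (convex_Icc _ _)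
    (fun y _ ↦ (hasDerivAt (hJ y) (hJ' y)).continuousAt.continuousWithinAt) ?_
  rintro φ hφ
  rw [interior_Icc] at hφ
  have hsin : 0 < sin φ := sin_pos_of_pos_of_lt_pi hφ.1 (by linarith [pi_pos, hφ.2])
  have hcos : 0 < cos φ := cos_pos_of_mem_Ioo ⟨by linarith [pi_pos, hφ.1], hφ.2⟩
  rw [deriv_eq_of_ode (hJ φ) (hJ' φ) hsin.ne' (hode φ hφ)]
  linarith [mul_pos (mul_pos hsin hcos) (hpos φ hφ)]

end sturmWronskian

end

/-- There is no positive rotationally symmetric solution of `Δ_{S²} J + 4J = 0` on the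
open hemisphere that is smooth at the pole: writing `Δ_{S²} J = J'' + cot(φ) J'` for
radial functions of the azimuthal variable `φ`, no `C²` function `J` with `J'(0) = 0`
can satisfy `J'' + cot(φ) J' + 4J = 0` on `(0, π/2)` while remaining positive on
`[0, π/2)` (Sturm–Liouville comparison with `f = cos φ`, which solves
`Δ_{S²} f + 2f = 0` and first vanishes at `π/2`). -/
theorem stmt_17 :
    ¬ ∃ J : ℝ → ℝ, ContDiff ℝ 2 J ∧
      (∀ φ ∈ Set.Ioo (0 : ℝ) (π / 2),
        deriv (deriv J) φ + (Real.cos φ / Real.sin φ) * deriv J φ + 4 * J φ = 0) ∧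
      deriv J 0 = 0 ∧
      (∀ φ ∈ Set.Ico (0 : ℝ) (π / 2), 0 < J φ) := by
  rintro ⟨J, hJ, hode, -, hpos⟩
  have hpi : (0 : ℝ) < π / 2 := by positivity
  have hanti := sturmWronskian.strictAntiOn (hJ.differentiable two_ne_zero)
    hJ.differentiable_deriv_two hode fun φ hφ ↦ hpos φ (Ioo_subset_Ico_self hφ)
  have hJnonneg : Icc 0 (π / 2) ⊆ {φ | 0 ≤ J φ} := by
    rw [← closure_Ico hpi.ne, (isClosed_le continuous_const hJ.continuous).closure_subset_iff]
    exact fun φ hφ ↦ (hpos φ hφ).le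
  have hdecr := hanti (left_mem_Icc.2 hpi.le) (right_mem_Icc.2 hpi.le) hpi
  rw [sturmWronskian.apply_zero, sturmWronskian.apply_pi_div_two] at hdecr
  exact (hJnonneg (right_mem_Icc.2 hpi.le)).not_gt hdecr
end
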